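/- For every H in (1/2,1) and all reals 0 < s < t, the kernel Z_H admits the alternative integral representation Z_H(t,s) = κ_H·(H−1/2)·s^{1/2−H}·∫_s^t u^{H−1/2}(u−s)^{H−3/2} du; that is, (H−1/2)·s^{1/2−H}·∫_s^t u^{H−1/2}(u−s)^{H−3/2} du = (t/s)^{H−1/2}(t−s)^{H−1/2} − (H−1/2)·s^{1/2−H}·∫_s^t u^{H−3/2}(u−s)^{H−1/2} du. In particular, the operator Γ*_{H,T} applied to the indicator function 1_{[0,t]} equals Z_H(t,·) on (0,t), so the transform definition of the fractional Wiener integral is consistent with the kernel representation of fractional Brownian motion. -/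

import Mathlib

open MeasureTheory Real Set intervalIntegral

/-!
With `a = H - 1/2 > 0`, integrating `u ^ a` by parts against `d (u - s) ^ a` over `[s, t]` gives
`a ∫ u ^ a (u - s) ^ (a - 1) = t ^ a (t - s) ^ a - a ∫ u ^ (a - 1) (u - s) ^ a`: the boundary term
at `s` vanishes because `a > 0`, and `(u - s) ^ (a - 1)` is integrable because `a - 1 > -1`.
Multiplying by `s ^ (-a)` gives the representation. For the transfer operator, the indicator of
`[0, t]` cuts the integral over `[s, T]` down to `[s, t]`, so `Γ*_{H,T} 1_{[0,t]} (s)` is `κ_H` times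
the left-hand side of the representation, i.e. `Z_H (t, s)`.
-/

/-- The normalizing constant `κ_H`. -/
noncomputable def kappaH (H : ℝ) : ℝ :=
  Real.sqrt (2 * H * Real.Gamma (3/2 - H) / (Real.Gamma (H + 1/2) * Real.Gamma (2 - 2*H)))

/-- The kernel `Z_H(t,s)` of the moving-average representation of fractional
Brownian motion with Hurst parameter `H`. -/
noncomputable def ZH (H t s : ℝ) : ℝ :=
  kappaH H * ((t / s) ^ (H - 1/2) * (t - s) ^ (H - 1/2)
    - (H - 1/2) * s ^ ((1:ℝ)/2 - H) * ∫ u in s..t, u ^ (H - 3/2) * (u - s) ^ (H - 1/2))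

/-- The transfer operator `Γ*_{H,T}`:
`(Γ*_{H,T} f)(t) = (H - 1/2) κ_H t^{1/2-H} ∫_t^T u^{H-1/2} (u-t)^{H-3/2} f(u) du`. -/
noncomputable def gammaStar (H T : ℝ) (f : ℝ → ℝ) (t : ℝ) : ℝ :=
  (H - 1/2) * kappaH H * t ^ ((1:ℝ)/2 - H) *
    ∫ u in t..T, u ^ (H - 1/2) * (u - t) ^ (H - 3/2) * f u

theorem integral_rpow_mul_sub_rpow_sub_one {a s t : ℝ} (ha : 0 < a) (hs : 0 < s) (hst : s ≤ t) :
    a * ∫ u in s..t, u ^ a * (u - s) ^ (a - 1)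
      = t ^ a * (t - s) ^ a - a * ∫ u in s..t, u ^ (a - 1) * (u - s) ^ a := by
  have hpos : ∀ x ∈ uIcc s t, 0 < x := fun x hx =>
    hs.trans_le (by rw [uIcc_of_le hst] at hx; exact hx.1)
  have hmin : min s t = s := min_eq_left hst
  have ibp := integral_mul_deriv_eq_deriv_mul_of_hasDerivAt
    (u := fun u => u ^ a) (v := fun u => (u - s) ^ a)
    (u' := fun u => a * u ^ (a - 1)) (v' := fun u => a * (u - s) ^ (a - 1))
    (continuousOn_id.rpow_const fun x hx => Or.inl (hpos x hx).ne')
    ((continuousOn_id.sub continuousOn_const).rpow_const fun _ _ => Or.inr ha.le)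
    (fun x hx => hasDerivAt_rpow_const (Or.inl (hpos x (Ioo_subset_Icc_self hx)).ne'))
    (fun x hx => by
      rw [hmin] at hx
      simpa using ((hasDerivAt_id x).sub_const s).rpow_const (p := a)
        (Or.inl (sub_pos.2 hx.1).ne'))
    ((continuousOn_id.rpow_const fun x hx => Or.inl (hpos x hx).ne').const_smul a
      |>.intervalIntegrable)
    (by simpa using ((intervalIntegrable_rpow' (r := a - 1) (by linarith)).comp_sub_right s
      (a := 0) (b := t - s)).const_mul a)
  simp only [sub_self, zero_rpow ha.ne', mul_zero, sub_zero] at ibp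
  rw [← intervalIntegral.integral_const_mul, ← intervalIntegral.integral_const_mul]
  convert ibp using 3 <;> (try funext x) <;> ring

theorem integral_mul_indicator_Icc_of_le {f : ℝ → ℝ} {a s t T : ℝ} (has : a ≤ s) (hst : s ≤ t)
    (htT : t ≤ T) :
    ∫ u in s..T, f u * (Icc a t).indicator (fun _ => (1 : ℝ)) u = ∫ u in s..t, f u := by
  have hIoc : Ioc s T ∩ Icc a t = Ioc s t := by
    ext x
    simp only [mem_inter_iff, mem_Ioc, mem_Icc]
    constructor
    · rintro ⟨⟨hsx, -⟩, -, hxt⟩; exact ⟨hsx, hxt⟩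
    · rintro ⟨hsx, hxt⟩; exact ⟨⟨hsx, hxt.trans htT⟩, has.trans hsx.le, hxt⟩
  simp_rw [← indicator_mul_right, mul_one]
  rw [integral_of_le (hst.trans htT), integral_of_le hst,
    setIntegral_indicator measurableSet_Icc, hIoc]

/-- Alternative integral representation of the kernel `Z_H`: for `1/2 < H < 1` and
`0 < s < t`,
`(H-1/2) s^{1/2-H} ∫_s^t u^{H-1/2}(u-s)^{H-3/2} du
  = (t/s)^{H-1/2}(t-s)^{H-1/2} - (H-1/2) s^{1/2-H} ∫_s^t u^{H-3/2}(u-s)^{H-1/2} du`,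
i.e. `Z_H(t,s) = κ_H (H-1/2) s^{1/2-H} ∫_s^t u^{H-1/2}(u-s)^{H-3/2} du`.
In particular, `Γ*_{H,T}` applied to the indicator of `[0,t]` equals `Z_H(t,·)`
on `(0,t)`, so the transform definition of the fractional Wiener integral is
consistent with the kernel representation of fractional Brownian motion. -/
theorem ZH_alternative_representation (H : ℝ) (hH : H ∈ Set.Ioo (1/2 : ℝ) 1)
    (s t : ℝ) (hs : 0 < s) (hst : s < t) :
    ((H - 1/2) * s ^ ((1:ℝ)/2 - H) * ∫ u in s..t, u ^ (H - 1/2) * (u - s) ^ (H - 3/2)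
        = (t / s) ^ (H - 1/2) * (t - s) ^ (H - 1/2)
          - (H - 1/2) * s ^ ((1:ℝ)/2 - H) * ∫ u in s..t, u ^ (H - 3/2) * (u - s) ^ (H - 1/2))
    ∧ ∀ T : ℝ, t ≤ T →
        gammaStar H T (Set.indicator (Set.Icc (0:ℝ) t) fun _ => (1:ℝ)) s = ZH H t s := by
  have ibp := integral_rpow_mul_sub_rpow_sub_one (a := H - 1/2) (by linarith [hH.1]) hs hst.le
  rw [show H - 1/2 - 1 = H - 3/2 by ring] at ibp
  have hdiv : (t / s) ^ (H - 1/2) = t ^ (H - 1/2) * s ^ ((1:ℝ)/2 - H) := by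
    rw [div_rpow (hs.trans hst).le hs.le, show (1:ℝ)/2 - H = -(H - 1/2) by ring,
      rpow_neg hs.le, div_eq_mul_inv]
  have representation : (H - 1/2) * s ^ ((1:ℝ)/2 - H)
        * ∫ u in s..t, u ^ (H - 1/2) * (u - s) ^ (H - 3/2)
      = (t / s) ^ (H - 1/2) * (t - s) ^ (H - 1/2)
        - (H - 1/2) * s ^ ((1:ℝ)/2 - H) * ∫ u in s..t, u ^ (H - 3/2) * (u - s) ^ (H - 1/2) := by
    rw [hdiv]
    linear_combination s ^ ((1:ℝ)/2 - H) * ibp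
  refine ⟨representation, fun T htT => ?_⟩
  rw [gammaStar, ZH, integral_mul_indicator_Icc_of_le hs.le hst.le htT, ← representation]
  ring
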